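/- arXiv:2508.09863 — 4 statements merged into one kernel-verified Lean document; each statement's English description precedes it below -/
import Mathlib

section
/- Let α > 0 and d, c, β ∈ ℝ. Then ∫_ℝ erf(dξ + c) · exp(−(αξ + β)²) dξ = (√π / α) · erf((αc − dβ)/√(α² + d²)). In particular, for d = 1 one has ∫_ℝ erf(ξ + b) e^{−(αξ+β)²} dξ = (√π/α) erf((αb − β)/√(1 + α²)). -/
/-!
Both sides are functions of `c` with the same derivative
`2 / √(α² + d²) · exp (-(α c - d β)² / (α² + d²))`: on the left, differentiating under the
integral sign leaves a product of two Gaussians, which is again a Gaussian after completing the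
square. Both sides vanish at `c = d β / α`: the right one trivially, the left one because after the
shift `ξ ↦ ξ - β / α` the integrand is odd.
-/

open Real MeasureTheory

/-- The error function `erf x = (2/√π) ∫₀ˣ e^{−t²} dt`. -/
noncomputable def erf (x : ℝ) : ℝ :=
  (2 / Real.sqrt π) * ∫ t in (0 : ℝ)..x, Real.exp (-t ^ 2)

theorem hasDerivAt_erf (x : ℝ) : HasDerivAt erf (2 / √π * exp (-x ^ 2)) x :=
  ((by fun_prop : Continuous fun t : ℝ => exp (-t ^ 2)).integral_hasStrictDerivAt 0 x
    |>.hasDerivAt.const_mul _)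

theorem continuous_erf : Continuous erf :=
  continuous_iff_continuousAt.2 fun x => (hasDerivAt_erf x).continuousAt

theorem erf_zero : erf 0 = 0 := by simp [erf]

theorem erf_neg (x : ℝ) : erf (-x) = -erf x := by
  have h := intervalIntegral.integral_comp_neg (a := 0) (b := x) fun t => exp (-t ^ 2)
  simp only [neg_sq, neg_zero] at h
  rw [erf, erf, h, intervalIntegral.integral_symm, mul_neg]

theorem erf_mem_Icc_of_nonneg {x : ℝ} (hx : 0 ≤ x) : erf x ∈ Set.Icc 0 1 := by
  have hIoi : ∫ t in Set.Ioi 0, exp (-t ^ 2) = √π / 2 := by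
    simpa using integral_gaussian_Ioi 1
  have hle : ∫ t in Set.Ioc 0 x, exp (-t ^ 2) ≤ √π / 2 :=
    hIoi ▸ setIntegral_mono_set (by simpa using (integrable_exp_neg_mul_sq one_pos).integrableOn)
      (.of_forall fun t => (exp_pos _).le) (.of_forall Set.Ioc_subset_Ioi_self)
  have hπ : 0 < √π := sqrt_pos.2 pi_pos
  rw [erf, intervalIntegral.integral_of_le hx]
  refine ⟨by positivity, ?_⟩
  calc 2 / √π * ∫ t in Set.Ioc 0 x, exp (-t ^ 2) ≤ 2 / √π * (√π / 2) := by gcongr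
    _ = 1 := by field_simp

theorem abs_erf_le_one (x : ℝ) : |erf x| ≤ 1 := by
  rcases le_total 0 x with hx | hx
  · obtain ⟨h0, h1⟩ := erf_mem_Icc_of_nonneg hx
    exact abs_le.2 ⟨by linarith, h1⟩
  · obtain ⟨h0, h1⟩ := erf_mem_Icc_of_nonneg (neg_nonneg.2 hx)
    rw [erf_neg] at h0 h1
    exact abs_le.2 ⟨by linarith, by linarith⟩

theorem hasDerivAt_integral_erf_mul {μ : Measure ℝ} (d : ℝ) {g : ℝ → ℝ} (hg : Integrable g μ)
    (c : ℝ) :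
    HasDerivAt (fun c => ∫ ξ, erf (d * ξ + c) * g ξ ∂μ)
      (∫ ξ, 2 / √π * exp (-(d * ξ + c) ^ 2) * g ξ ∂μ) c := by
  have hmeas : ∀ y, AEStronglyMeasurable (fun ξ => erf (d * ξ + y) * g ξ) μ := fun y =>
    (continuous_erf.comp (by fun_prop)).aestronglyMeasurable.mul hg.aestronglyMeasurable
  have hint : Integrable (fun ξ => erf (d * ξ + c) * g ξ) μ :=
    hg.bdd_mul (continuous_erf.comp (by fun_prop)).aestronglyMeasurable
      (.of_forall fun ξ => abs_erf_le_one _)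
  have hmeas' : AEStronglyMeasurable (fun ξ => 2 / √π * exp (-(d * ξ + c) ^ 2) * g ξ) μ :=
    (by fun_prop : Continuous fun ξ => 2 / √π * exp (-(d * ξ + c) ^ 2)).aestronglyMeasurable.mul
      hg.aestronglyMeasurable
  have hbound : ∀ ξ, ∀ y ∈ Set.univ,
      ‖2 / √π * exp (-(d * ξ + y) ^ 2) * g ξ‖ ≤ 2 / √π * ‖g ξ‖ := by
    intro ξ y _
    rw [norm_mul, norm_mul, Real.norm_of_nonneg (by positivity),
      Real.norm_of_nonneg (exp_pos _).le]
    gcongr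
    exact mul_le_of_le_one_right (by positivity) (exp_le_one_iff.2 (neg_nonpos.2 (sq_nonneg _)))
  have hderiv : ∀ ξ, ∀ y ∈ Set.univ,
      HasDerivAt (fun y => erf (d * ξ + y) * g ξ) (2 / √π * exp (-(d * ξ + y) ^ 2) * g ξ) y := by
    intro ξ y _
    simpa using ((hasDerivAt_erf _).comp y ((hasDerivAt_id y).const_add (d * ξ))).mul_const (g ξ)
  exact (hasDerivAt_integral_of_dominated_loc_of_deriv_le Filter.univ_mem (.of_forall hmeas) hint
    hmeas' (.of_forall hbound) (hg.norm.const_mul _) (.of_forall hderiv)).2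

theorem integrable_exp_neg_sq_affine {a : ℝ} (ha : a ≠ 0) (b : ℝ) :
    Integrable fun ξ : ℝ => exp (-(a * ξ + b) ^ 2) := by
  have h : Integrable fun x : ℝ => exp (-(x + b) ^ 2) := by
    simpa using (integrable_exp_neg_mul_sq one_pos).comp_add_right b
  simpa using h.comp_mul_left' ha

theorem integral_exp_neg_sq_mul_exp_neg_sq (a b p q : ℝ) (hs : 0 < a ^ 2 + p ^ 2) :
    ∫ ξ : ℝ, exp (-(a * ξ + b) ^ 2) * exp (-(p * ξ + q) ^ 2)
      = √π / √(a ^ 2 + p ^ 2) * exp (-(p * b - a * q) ^ 2 / (a ^ 2 + p ^ 2)) := by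
  have hsquare : ∀ ξ, exp (-(a * ξ + b) ^ 2) * exp (-(p * ξ + q) ^ 2)
      = exp (-(p * b - a * q) ^ 2 / (a ^ 2 + p ^ 2))
        * exp (-(a ^ 2 + p ^ 2) * (ξ + (a * b + p * q) / (a ^ 2 + p ^ 2)) ^ 2) := by
    intro ξ
    rw [← exp_add, ← exp_add]
    congr 1
    field_simp
    ring
  simp only [hsquare]
  rw [integral_const_mul, integral_add_right_eq_self fun t => exp (-(a ^ 2 + p ^ 2) * t ^ 2),
    integral_gaussian, sqrt_div pi_pos.le]
  ring

theorem integral_erf_mul_eq_zero_of_even (d : ℝ) {g : ℝ → ℝ} (hg : ∀ x, g (-x) = g x) :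
    ∫ ξ, erf (d * ξ) * g ξ = 0 := by
  have h := integral_neg_eq_self (fun ξ => erf (d * ξ) * g ξ) volume
  simp only [mul_neg, erf_neg, hg, neg_mul, integral_neg] at h
  linarith

theorem integral_erf_affine_mul_exp_neg_sq (α d c β : ℝ) (hα : α ≠ 0) :
    ∫ ξ : ℝ, erf (d * ξ + c) * exp (-(α * ξ + β) ^ 2)
      = √π / α * erf ((α * c - d * β) / √(α ^ 2 + d ^ 2)) := by
  have hs : 0 < α ^ 2 + d ^ 2 := by positivity
  set D : ℝ → ℝ := fun c => 2 / √(α ^ 2 + d ^ 2) * exp (-(α * c - d * β) ^ 2 / (α ^ 2 + d ^ 2))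
  have hL : ∀ c,
      HasDerivAt (fun c => ∫ ξ : ℝ, erf (d * ξ + c) * exp (-(α * ξ + β) ^ 2)) (D c) c := by
    intro c
    convert hasDerivAt_integral_erf_mul d (integrable_exp_neg_sq_affine hα β) c using 1
    simp_rw [mul_assoc, integral_const_mul]
    rw [integral_exp_neg_sq_mul_exp_neg_sq d c α β (by linarith), add_comm (d ^ 2)]
    simp only [D]
    field_simp
  have hR : ∀ c,
      HasDerivAt (fun c => √π / α * erf ((α * c - d * β) / √(α ^ 2 + d ^ 2))) (D c) c := by
    intro c
    have h := ((hasDerivAt_erf _).comp c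
      ((((hasDerivAt_id c).const_mul α).sub_const (d * β)).div_const √(α ^ 2 + d ^ 2))).const_mul
      (√π / α)
    refine h.congr_deriv ?_
    simp only [D, id, mul_one, neg_div, div_pow, sq_sqrt hs.le]
    field_simp
  have h0 : α * (d * β / α) - d * β = 0 := by field_simp; ring
  have hL0 : ∫ ξ : ℝ, erf (d * ξ + d * β / α) * exp (-(α * ξ + β) ^ 2) = 0 := by
    have h := integral_add_right_eq_self (μ := volume)
      (fun t : ℝ => erf (d * t) * exp (-(α * t) ^ 2)) (β / α)
    rw [integral_erf_mul_eq_zero_of_even d fun x => by ring_nf] at h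
    rw [← h]
    congr 1 with ξ
    field_simp
  have hR0 : √π / α * erf ((α * (d * β / α) - d * β) / √(α ^ 2 + d ^ 2)) = 0 := by
    rw [h0, zero_div, erf_zero, mul_zero]
  exact isOpen_univ.eqOn_of_deriv_eq isPreconnected_univ
    (fun c _ => (hL c).differentiableAt.differentiableWithinAt)
    (fun c _ => (hR c).differentiableAt.differentiableWithinAt)
    (fun c _ => (hL c).deriv.trans (hR c).deriv.symm) (Set.mem_univ (d * β / α))
    (hL0.trans hR0.symm) (Set.mem_univ c)

/-- Integral of erf against a Gaussian (Briggs' formula), together with the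
particular case `d = 1`. -/
theorem erf_gaussian_integral (α d c β : ℝ) (hα : 0 < α) :
    ((∫ ξ : ℝ, erf (d * ξ + c) * Real.exp (-(α * ξ + β) ^ 2))
        = (Real.sqrt π / α) * erf ((α * c - d * β) / Real.sqrt (α ^ 2 + d ^ 2))) ∧
    (∀ b : ℝ, (∫ ξ : ℝ, erf (ξ + b) * Real.exp (-(α * ξ + β) ^ 2))
        = (Real.sqrt π / α) * erf ((α * b - β) / Real.sqrt (1 + α ^ 2))) := by
  refine ⟨integral_erf_affine_mul_exp_neg_sq α d c β hα.ne', fun b => ?_⟩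
  simpa [add_comm] using integral_erf_affine_mul_exp_neg_sq α 1 b β hα.ne'
end

section
/- Let ε > 0, σ > 0, τ > 0 and θ, θ_l ∈ ℝ, and set a = √(1 + 2εσ²τ). Then ∫_ℝ (ζ − θ_l) · exp(−ε(ζ − θ_l)² − (θ − ζ)²/(2σ²τ))/(σ√(2πτ)) dζ = ((θ − θ_l)/a³) · exp(−ε(θ − θ_l)²/a²). -/
/-!
Completing the square in `ζ` turns the exponent into `-A (ζ - q)² + C` with
`A = ε + 1/(2σ²τ) = a²/(2σ²τ)`, `q - θ_l = (θ - θ_l)/a²` and `C = -ε (θ - θ_l)²/a²`.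
The first moment about `θ_l` of the shifted Gaussian `exp (-A (ζ - q)²)` is `(q - θ_l) √(π/A)`,
and `√(π/A) = σ √(2πτ) / a`.
-/

open Real MeasureTheory

theorem integral_mul_exp_neg_mul_sq_eq_zero (b : ℝ) :
    ∫ x : ℝ, x * exp (-b * x ^ 2) = 0 := by
  have h := integral_neg_eq_self (fun x : ℝ => x * exp (-b * x ^ 2)) volume
  simp only [neg_sq, neg_mul, integral_neg] at h
  simp only [neg_mul]
  linarith

theorem integral_sub_mul_exp_neg_mul_sub_sq {b : ℝ} (hb : 0 < b) (p q : ℝ) :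
    ∫ x : ℝ, (x - p) * exp (-b * (x - q) ^ 2) = (q - p) * √(π / b) := by
  rw [← integral_add_right_eq_self _ q]
  have hsplit : ∀ x : ℝ, (x + q - p) * exp (-b * (x + q - q) ^ 2)
      = x * exp (-b * x ^ 2) + (q - p) * exp (-b * x ^ 2) := fun x => by ring_nf
  simp only [hsplit]
  rw [integral_add (integrable_mul_exp_neg_mul_sq hb) ((integrable_exp_neg_mul_sq hb).const_mul _),
    integral_const_mul, integral_mul_exp_neg_mul_sq_eq_zero, integral_gaussian, zero_add]

theorem neg_mul_sub_sq_sub_sq_div_eq {ε v : ℝ} (hv : v ≠ 0) (hεv : 1 + ε * v ≠ 0) (m θ ζ : ℝ) :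
    -ε * (ζ - m) ^ 2 - (θ - ζ) ^ 2 / v
      = -(ε + 1 / v) * (ζ - (m + (θ - m) / (1 + ε * v))) ^ 2 - ε * (θ - m) ^ 2 / (1 + ε * v) := by
  field_simp
  ring

/-- First-moment convolution of a Gaussian RBF with the 1D heat kernel. -/
theorem gaussian_rbf_heat_first_moment
    (ε σ τ θ θ_l : ℝ) (hε : 0 < ε) (hσ : 0 < σ) (hτ : 0 < τ)
    (a : ℝ) (ha : a = Real.sqrt (1 + 2 * ε * σ ^ 2 * τ)) :
    (∫ ζ : ℝ,
        (ζ - θ_l) * (Real.exp (-ε * (ζ - θ_l) ^ 2 - (θ - ζ) ^ 2 / (2 * σ ^ 2 * τ)) /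
          (σ * Real.sqrt (2 * π * τ))))
      = ((θ - θ_l) / a ^ 3) * Real.exp (-ε * (θ - θ_l) ^ 2 / a ^ 2) := by
  set v := 2 * σ ^ 2 * τ
  have hv : 0 < v := by positivity
  have ha2 : a ^ 2 = 1 + ε * v := by rw [ha, sq_sqrt (by positivity)]; ring
  have hapos : 0 < a := by rw [ha]; positivity
  set A := ε + 1 / v
  set q := θ_l + (θ - θ_l) / a ^ 2
  set K := exp (-ε * (θ - θ_l) ^ 2 / a ^ 2) / (σ * √(2 * π * τ))
  have hsqrt : √(π / A) = σ * √(2 * π * τ) / a := by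
    rw [show π / A = σ ^ 2 * (2 * π * τ) / a ^ 2 by
        rw [ha2]; simp only [A, v]; field_simp; ring,
      sqrt_div (by positivity), sqrt_mul (sq_nonneg σ), sqrt_sq hσ.le, sqrt_sq hapos.le]
  calc _ = (∫ ζ : ℝ, (ζ - θ_l) * exp (-A * (ζ - q) ^ 2)) * K := by
        rw [← integral_mul_const]
        congr 1 with ζ
        rw [neg_mul_sub_sq_sub_sq_div_eq hv.ne' (by positivity), ← ha2, sub_eq_add_neg _ (_ / _),
          exp_add]
        simp only [A, q, K, neg_mul, neg_div]
        ring
    _ = (q - θ_l) * √(π / A) * K := by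
        rw [integral_sub_mul_exp_neg_mul_sub_sq (by positivity)]
    _ = _ := by
        simp only [q, K, hsqrt]
        field_simp
        ring
end

section
/- Let ε > 0, σ_y > 0, τ > 0 and y, y_j ∈ ℝ, and set a = √(1 + 2εσ_y²τ) and λ = ((y − y_j) + y_j·a²)² + a²σ_y²τ. Then ∫_ℝ η² · exp(−ε(η − y_j)² − (y − η)²/(2σ_y²τ))/(σ_y√(2πτ)) dη = (λ/a⁵) · exp(−ε(y − y_j)²/a²). -/
open Real MeasureTheory ProbabilityTheory
open scoped NNReal

/-!
Completing the square in `η`, the product of the radial basis function with the heat kernel is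
`a⁻¹ e^{-ε (y - y_j)² / a²}` times the normal density with mean `((y - y_j) + y_j a²) / a²` and
variance `σ_y² τ / a²`, and the second moment of a normal law is its squared mean plus its variance.
-/

lemma integral_sq_gaussianReal (μ : ℝ) (v : ℝ≥0) :
    ∫ x, x ^ 2 ∂gaussianReal μ v = μ ^ 2 + v := by
  have h := variance_eq_sub (memLp_id_gaussianReal' (μ := μ) (v := v) 2 (by simp))
  rw [variance_id_gaussianReal] at h
  simp only [Pi.pow_apply, id, integral_id_gaussianReal] at h
  linarith

lemma integral_sq_mul_gaussianPDFReal (μ : ℝ) {v : ℝ≥0} (hv : v ≠ 0) :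
    ∫ x, x ^ 2 * gaussianPDFReal μ v x = μ ^ 2 + v := by
  simpa [mul_comm] using
    (integral_gaussianReal_eq_integral_smul (f := fun x ↦ x ^ 2) hv).symm.trans
      (integral_sq_gaussianReal μ v)

lemma exp_neg_mul_sq_mul_gaussianPDFReal (ε v : ℝ≥0) (m μ x : ℝ) :
    rexp (-ε * (x - m) ^ 2) * gaussianPDFReal μ v x =
      rexp (-ε * (μ - m) ^ 2 / (1 + 2 * ε * v)) / √(1 + 2 * ε * v) *
        gaussianPDFReal ((μ + 2 * ε * v * m) / (1 + 2 * ε * v)) (v / (1 + 2 * ε * v)) x := by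
  rcases eq_or_ne v 0 with rfl | hv
  · simp
  have hA : (0 : ℝ) < 1 + 2 * ε * v := by positivity
  have hv' : (0 : ℝ) < v := by positivity
  simp only [gaussianPDFReal_def, NNReal.coe_div, NNReal.coe_add, NNReal.coe_mul, NNReal.coe_one,
    NNReal.coe_ofNat]
  set A : ℝ := 1 + 2 * ε * v
  have hsqrt : √(2 * π * (v / A)) = √(2 * π * v) / √A := by
    rw [mul_div_assoc', sqrt_div' _ hA.le]
  have hexponent : -ε * (x - m) ^ 2 + -(x - μ) ^ 2 / (2 * v) =
      -ε * (μ - m) ^ 2 / A + -(x - (μ + 2 * ε * v * m) / A) ^ 2 / (2 * (v / A)) := by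
    field_simp
    ring
  calc rexp (-ε * (x - m) ^ 2) * ((√(2 * π * v))⁻¹ * rexp (-(x - μ) ^ 2 / (2 * v)))
      = (√(2 * π * v))⁻¹ * rexp (-ε * (x - m) ^ 2 + -(x - μ) ^ 2 / (2 * v)) := by
        rw [exp_add]; ring
    _ = _ := by
        rw [hexponent, exp_add, hsqrt]
        field_simp

/-- Second-moment convolution of a Gaussian RBF with the 1D heat kernel. -/
theorem gaussian_rbf_heat_second_moment
    (ε σy τ y y_j : ℝ) (hε : 0 < ε) (hσy : 0 < σy) (hτ : 0 < τ)
    (a lam : ℝ) (ha : a = Real.sqrt (1 + 2 * ε * σy ^ 2 * τ))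
    (hlam : lam = ((y - y_j) + y_j * a ^ 2) ^ 2 + a ^ 2 * σy ^ 2 * τ) :
    (∫ η : ℝ,
        η ^ 2 * (Real.exp (-ε * (η - y_j) ^ 2 - (y - η) ^ 2 / (2 * σy ^ 2 * τ)) /
          (σy * Real.sqrt (2 * π * τ))))
      = (lam / a ^ 5) * Real.exp (-ε * (y - y_j) ^ 2 / a ^ 2) := by
  obtain ⟨v, hv_coe⟩ : ∃ v : ℝ≥0, (v : ℝ) = σy ^ 2 * τ := ⟨⟨_, by positivity⟩, rfl⟩
  obtain ⟨ε', hε_coe⟩ : ∃ ε' : ℝ≥0, (ε' : ℝ) = ε := ⟨⟨_, hε.le⟩, rfl⟩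
  have hv : v ≠ 0 := by rw [← NNReal.coe_ne_zero, hv_coe]; positivity
  have ha2 : a ^ 2 = 1 + 2 * ε' * v := by
    rw [ha, sq_sqrt (by positivity), hv_coe, hε_coe]; ring
  have hapos : 0 < a := by rw [ha]; positivity
  have hkernel (η : ℝ) : rexp (-ε * (η - y_j) ^ 2 - (y - η) ^ 2 / (2 * σy ^ 2 * τ)) /
      (σy * √(2 * π * τ)) = rexp (-ε' * (η - y_j) ^ 2) * gaussianPDFReal y v η := by
    have hnorm : σy * √(2 * π * τ) = √(2 * π * v) := by
      rw [show 2 * π * v = σy ^ 2 * (2 * π * τ) by rw [hv_coe]; ring,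
        sqrt_mul (sq_nonneg σy), sqrt_sq hσy.le]
    rw [gaussianPDFReal_def, hnorm, sub_eq_add_neg, exp_add, hε_coe, hv_coe, sub_sq_comm y]
    field_simp
  have hvar : v / (1 + 2 * ε' * v) ≠ 0 := div_ne_zero hv (by positivity)
  simp_rw [hkernel, exp_neg_mul_sq_mul_gaussianPDFReal, mul_left_comm _ (_ / _),
    integral_const_mul, integral_sq_mul_gaussianPDFReal _ hvar]
  have hmean : y + 2 * ε' * v * y_j = y - y_j + y_j * a ^ 2 := by rw [ha2]; ring
  push_cast
  rw [hmean, ← ha2, sqrt_sq hapos.le, hlam, hε_coe, hv_coe]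
  field_simp
end

section
/- Let ε > 0, σ > 0, τ > 0, d ∈ ℝ and θ, θ_l ∈ ℝ, and set a = √(1 + 2εσ²τ). Then ∫_ℝ erf(dζ) · exp(−ε(ζ − θ_l)² − (θ − ζ)²/(2σ²τ))/(σ√(2πτ)) dζ = (1/a) · exp(−ε(θ − θ_l)²/a²) · erf( d(θ + 2εσ²τ·θ_l) / (a·√(a² + 2d²σ²τ)) ). -/
open Real MeasureTheory

theorem erf_mul_eq_intervalIntegral (x y : ℝ) :
    erf (x * y) = 2 / √π * ∫ t in 0..x, y * exp (-(y * t) ^ 2) := by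
  have h := intervalIntegral.smul_integral_comp_mul_left (fun u => exp (-u ^ 2)) y (a := 0) (b := x)
  rw [mul_zero, smul_eq_mul] at h
  rw [erf, intervalIntegral.integral_const_mul, h, mul_comm x]

theorem exp_neg_mul_sq_sub_mul_exp_neg_mul_sq_sub {A B : ℝ} (h : A + B ≠ 0) (u v x : ℝ) :
    exp (-A * (x - u) ^ 2) * exp (-B * (x - v) ^ 2) =
      exp (-(A * B / (A + B)) * (u - v) ^ 2) *
        exp (-(A + B) * (x - (A * u + B * v) / (A + B)) ^ 2) := by
  rw [← exp_add, ← exp_add]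
  congr 1
  field_simp
  ring

theorem integrable_mul_exp_neg_mul_sq_sub {b : ℝ} (hb : 0 < b) (m : ℝ) :
    Integrable fun x => x * exp (-b * (x - m) ^ 2) := by
  have h : (fun x => x * exp (-b * (x - m) ^ 2)) =
      fun x => (x - m) * exp (-b * (x - m) ^ 2) + m * exp (-b * (x - m) ^ 2) := by
    ext x; ring
  rw [h]
  exact ((integrable_mul_exp_neg_mul_sq hb).comp_sub_right m).add
    (((integrable_exp_neg_mul_sq hb).comp_sub_right m).const_mul m)

theorem integral_mul_exp_neg_mul_sq (b : ℝ) : ∫ x, x * exp (-b * x ^ 2) = 0 := by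
  have h := integral_neg_eq_self (fun x => x * exp (-b * x ^ 2)) volume
  simp only [neg_mul, neg_sq, integral_neg] at h ⊢
  linarith

theorem integral_mul_exp_neg_mul_sq_sub {b : ℝ} (hb : 0 < b) (m : ℝ) :
    ∫ x, x * exp (-b * (x - m) ^ 2) = m * √(π / b) := by
  have h : (fun x => x * exp (-b * (x - m) ^ 2)) =
      fun x => (x - m) * exp (-b * (x - m) ^ 2) + m * exp (-b * (x - m) ^ 2) := by
    ext x; ring
  rw [h, integral_add ((integrable_mul_exp_neg_mul_sq hb).comp_sub_right m)
      (((integrable_exp_neg_mul_sq hb).comp_sub_right m).const_mul m),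
    integral_sub_right_eq_self (fun x => x * exp (-b * x ^ 2)),
    integral_const_mul, integral_sub_right_eq_self (fun x => exp (-b * x ^ 2)),
    integral_mul_exp_neg_mul_sq, integral_gaussian, zero_add]

theorem integral_mul_exp_neg_sq_mul_exp_neg_mul_sq_sub {p : ℝ} (hp : 0 < p) (q t : ℝ) :
    ∫ ζ, ζ * exp (-(ζ * t) ^ 2) * exp (-p * (ζ - q) ^ 2) =
      p * q / (t ^ 2 + p) * √(π / (t ^ 2 + p)) * exp (-(t ^ 2 * p / (t ^ 2 + p)) * q ^ 2) := by
  have hA : 0 < t ^ 2 + p := by positivity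
  have h : ∀ ζ, ζ * exp (-(ζ * t) ^ 2) * exp (-p * (ζ - q) ^ 2) =
      exp (-(t ^ 2 * p / (t ^ 2 + p)) * q ^ 2) *
        (ζ * exp (-(t ^ 2 + p) * (ζ - p * q / (t ^ 2 + p)) ^ 2)) := by
    intro ζ
    have := exp_neg_mul_sq_sub_mul_exp_neg_mul_sq_sub hA.ne' 0 q ζ
    simp only [sub_zero, mul_zero, zero_add, zero_sub, neg_sq] at this
    rw [mul_assoc, show -(ζ * t) ^ 2 = -t ^ 2 * ζ ^ 2 by ring, this]
    ring
  simp_rw [h]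
  rw [integral_const_mul, integral_mul_exp_neg_mul_sq_sub hA]
  ring

theorem hasDerivAt_div_sqrt_sq_add {p : ℝ} (hp : 0 < p) (t : ℝ) :
    HasDerivAt (fun t => t / √(t ^ 2 + p)) (p / ((t ^ 2 + p) * √(t ^ 2 + p))) t := by
  have hA : 0 < t ^ 2 + p := by positivity
  have hs : 0 < √(t ^ 2 + p) := sqrt_pos.mpr hA
  have hsq := (((hasDerivAt_pow 2 t).add_const p).sqrt hA.ne')
  refine ((hasDerivAt_id' t).div hsq hs.ne').congr_deriv ?_
  rw [sq_sqrt hA.le]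
  field_simp
  rw [sq_sqrt hA.le]
  ring

theorem integral_erf_mul_exp_neg_mul_sq_sub_eq_intervalIntegral (d : ℝ) {p : ℝ} (hp : 0 < p)
    (q : ℝ) :
    ∫ ζ, erf (d * ζ) * exp (-p * (ζ - q) ^ 2) =
      2 / √π * ∫ t in 0..d, ∫ ζ, ζ * exp (-(ζ * t) ^ 2) * exp (-p * (ζ - q) ^ 2) := by
  have hint : Integrable
      (Function.uncurry fun t ζ => ζ * exp (-(ζ * t) ^ 2) * exp (-p * (ζ - q) ^ 2))
      ((volume.restrict (Set.uIoc 0 d)).prod volume) := by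
    have : IsFiniteMeasure (volume.restrict (Set.uIoc 0 d)) :=
      isFiniteMeasure_restrict.mpr measure_Ioc_lt_top.ne
    refine ((integrable_const (1 : ℝ)).mul_prod
      (integrable_mul_exp_neg_mul_sq_sub hp q).norm).mono' ?_ ?_
    · exact Continuous.aestronglyMeasurable (by fun_prop)
    filter_upwards with z
    simp only [Function.uncurry, norm_mul, norm_eq_abs, abs_exp, one_mul]
    gcongr
    exact mul_le_of_le_one_right (abs_nonneg _) (exp_le_one_iff.mpr (neg_nonpos.mpr (sq_nonneg _)))
  rw [intervalIntegral_integral_swap hint, ← integral_const_mul]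
  congr 1 with ζ
  rw [erf_mul_eq_intervalIntegral, intervalIntegral.integral_mul_const, mul_assoc]

theorem intervalIntegral_gaussian_mean_eq_erf {p : ℝ} (hp : 0 < p) (q d : ℝ) :
    ∫ t in 0..d, p * q / (t ^ 2 + p) * √(π / (t ^ 2 + p)) *
        exp (-(t ^ 2 * p / (t ^ 2 + p)) * q ^ 2) =
      π / (2 * √p) * erf (d * q * √p / √(d ^ 2 + p)) := by
  have hderiv : ∀ t, HasDerivAt (fun t => π / (2 * √p) * erf (q * √p * (t / √(t ^ 2 + p))))
      (p * q / (t ^ 2 + p) * √(π / (t ^ 2 + p)) * exp (-(t ^ 2 * p / (t ^ 2 + p)) * q ^ 2)) t := by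
    intro t
    have hA : 0 < t ^ 2 + p := by positivity
    refine (((hasDerivAt_erf _).comp t
      ((hasDerivAt_div_sqrt_sq_add hp t).const_mul (q * √p))).const_mul _).congr_deriv ?_
    have hexp : (q * √p * (t / √(t ^ 2 + p))) ^ 2 = t ^ 2 * p / (t ^ 2 + p) * q ^ 2 := by
      rw [mul_pow, mul_pow, div_pow, sq_sqrt hp.le, sq_sqrt hA.le]; ring
    rw [hexp, sqrt_div pi_pos.le]
    field_simp
    rw [sq_sqrt pi_pos.le]
  have hcont : Continuous fun t : ℝ => p * q / (t ^ 2 + p) * √(π / (t ^ 2 + p)) *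
      exp (-(t ^ 2 * p / (t ^ 2 + p)) * q ^ 2) := by
    fun_prop (disch := (intro x; positivity))
  rw [intervalIntegral.integral_eq_sub_of_hasDerivAt (fun t _ => hderiv t)
    (hcont.intervalIntegrable _ _)]
  simp only [zero_div, mul_zero, erf_zero, sub_zero]
  ring_nf

theorem integral_erf_mul_exp_neg_mul_sq_sub (d : ℝ) {p : ℝ} (hp : 0 < p) (q : ℝ) :
    ∫ ζ, erf (d * ζ) * exp (-p * (ζ - q) ^ 2) = √(π / p) * erf (d * q * √p / √(d ^ 2 + p)) := by
  simp_rw [integral_erf_mul_exp_neg_mul_sq_sub_eq_intervalIntegral d hp q,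
    integral_mul_exp_neg_sq_mul_exp_neg_mul_sq_sub hp q, intervalIntegral_gaussian_mean_eq_erf hp]
  have hπ := sqrt_pos.mpr pi_pos
  rw [sqrt_div pi_pos.le]
  field_simp
  rw [sq_sqrt pi_pos.le]

theorem exp_neg_mul_sq_sub_sub_sq_div_eq {ε σ τ : ℝ} (hσ : σ ≠ 0) (hτ : τ ≠ 0)
    (hB : 1 + 2 * ε * σ ^ 2 * τ ≠ 0) (θ θ_l ζ : ℝ) :
    exp (-ε * (ζ - θ_l) ^ 2 - (θ - ζ) ^ 2 / (2 * σ ^ 2 * τ)) =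
      exp (-ε * (θ - θ_l) ^ 2 / (1 + 2 * ε * σ ^ 2 * τ)) *
        exp (-(ε + 1 / (2 * σ ^ 2 * τ)) *
          (ζ - (θ + 2 * ε * σ ^ 2 * τ * θ_l) / (1 + 2 * ε * σ ^ 2 * τ)) ^ 2) := by
  rw [← exp_add]
  congr 1
  set B := 1 + 2 * ε * σ ^ 2 * τ with hB_def
  field_simp
  rw [hB_def]
  ring

/-- Convolution of erf with the product of a Gaussian RBF and the 1D heat kernel. -/
theorem erf_gaussian_rbf_heat_convolution
    (ε σ τ d θ θ_l : ℝ) (hε : 0 < ε) (hσ : 0 < σ) (hτ : 0 < τ)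
    (a : ℝ) (ha : a = Real.sqrt (1 + 2 * ε * σ ^ 2 * τ)) :
    (∫ ζ : ℝ,
        erf (d * ζ) * (Real.exp (-ε * (ζ - θ_l) ^ 2 - (θ - ζ) ^ 2 / (2 * σ ^ 2 * τ)) /
          (σ * Real.sqrt (2 * π * τ))))
      = (1 / a) * Real.exp (-ε * (θ - θ_l) ^ 2 / a ^ 2) *
          erf (d * (θ + 2 * ε * σ ^ 2 * τ * θ_l) /
            (a * Real.sqrt (a ^ 2 + 2 * d ^ 2 * σ ^ 2 * τ))) := by
  subst ha
  have hB : 0 < 1 + 2 * ε * σ ^ 2 * τ := by positivity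
  simp_rw [exp_neg_mul_sq_sub_sub_sq_div_eq hσ.ne' hτ.ne' hB.ne', mul_div_right_comm _ _ (σ * _),
    mul_left_comm (erf _), integral_const_mul]
  set B := 1 + 2 * ε * σ ^ 2 * τ
  set p := ε + 1 / (2 * σ ^ 2 * τ)
  have hp : 0 < p := by positivity
  have hnorm : √(π / p) = σ * √(2 * π * τ) / √B := by
    rw [show π / p = σ ^ 2 * (2 * π * τ) / B by simp only [p, B]; field_simp; ring,
      sqrt_div' _ hB.le, sqrt_mul' _ (by positivity), sqrt_sq hσ.le]
  have hratio : √p / √(d ^ 2 + p) = √B / √(B + 2 * d ^ 2 * σ ^ 2 * τ) := by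
    rw [← sqrt_div hp.le, ← sqrt_div hB.le]
    congr 1
    simp only [p, B]
    field_simp
    ring
  have hB' := sqrt_pos.mpr hB
  rw [integral_erf_mul_exp_neg_mul_sq_sub d hp, mul_div_assoc (d * _), hratio, hnorm,
    sq_sqrt hB.le]
  field_simp
  congr 1
  field_simp
  rw [sq_sqrt hB.le]
  ring
end
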